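/- The function ψ is continuous, quasi-concave (ψ(λx + (1−λ)y) ≥ min{ψ(x), ψ(y)} for all x, y ∈ ℝ^p and λ ∈ [0,1]), increasing with respect to the componentwise order (x ≤ y componentwise implies ψ(x) ≤ ψ(y)), satisfies ψ(x_k) = 0, and satisfies ψ(x_j) ≥ ψ(x_k) for all j = 1, …, t. -/

import Mathlib

/-!
`ψ` is the signed distance to the translate `xk + E` of the convex cone `E`. Its superlevel sets
at levels `r ≤ 0` are sublevel sets of the convex function `dist(·, E)`; at levels `r > 0` they
consist of the points whose open `r`-ball lies in `E`, and these form a convex set because the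
ball around a convex combination is the same convex combination of the balls. Monotonicity holds
because `E + ℝᵖ₊ ⊆ E`, and `ψ(xk) = 0` because scaling by `2` maps the complement of the cone `E`
onto itself, so that `dist(0, Eᶜ) = 2 dist(0, Eᶜ)`.
-/

open Metric Set Pointwise

namespace Metric

section PseudoMetric

variable {α : Type*} [PseudoMetricSpace α] {s : Set α} {x : α}

/-- The negative of Hiriart-Urruty's oriented distance. -/
noncomputable def signedInfDist (s : Set α) (x : α) : ℝ := infDist x sᶜ - infDist x s

theorem signedInfDist_of_mem (h : x ∈ s) : signedInfDist s x = infDist x sᶜ := by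
  rw [signedInfDist, infDist_zero_of_mem h, sub_zero]

theorem signedInfDist_of_notMem (h : x ∉ s) : signedInfDist s x = -infDist x s := by
  rw [signedInfDist, infDist_zero_of_mem (mem_compl h), zero_sub]

theorem signedInfDist_nonneg_of_mem (h : x ∈ s) : 0 ≤ signedInfDist s x :=
  signedInfDist_of_mem h ▸ infDist_nonneg

theorem continuous_signedInfDist : Continuous (signedInfDist s) :=
  continuous_infDist_pt _ |>.sub (continuous_infDist_pt _)

end PseudoMetric

section Normed

variable {V : Type*} [SeminormedAddCommGroup V] {s : Set V}

theorem infDist_add_le_of_forall_add_mem {d : V} (h : ∀ y ∈ s, y + d ∈ s) (x : V) :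
    infDist (x + d) s ≤ infDist x s := by
  rcases s.eq_empty_or_nonempty with rfl | hne
  · simp
  exact (le_infDist hne).2 fun y hy =>
    (infDist_le_dist_of_mem (h y hy)).trans_eq (dist_add_right x y d)

theorem signedInfDist_le_add_of_forall_add_mem {d : V} (h : ∀ y ∈ s, y + d ∈ s) (x : V) :
    signedInfDist s x ≤ signedInfDist s (x + d) := by
  have hcompl : ∀ y ∈ sᶜ, y + -d ∈ sᶜ := fun y hy hyd =>
    hy (by simpa using h _ hyd)
  have hcompl_le := infDist_add_le_of_forall_add_mem hcompl (x + d)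
  rw [add_neg_cancel_right] at hcompl_le
  unfold signedInfDist
  linarith [infDist_add_le_of_forall_add_mem h x]

end Normed

section Convex

variable {V : Type*} [SeminormedAddCommGroup V] [NormedSpace ℝ V] {s : Set V}

theorem _root_.Convex.convexOn_infDist (hs : Convex ℝ s) : ConvexOn ℝ univ (infDist · s) := by
  refine ⟨convex_univ, fun x _ y _ a b ha hb hab => ?_⟩
  rcases s.eq_empty_or_nonempty with rfl | hne
  · simp
  refine le_of_forall_pos_le_add fun ε hε => ?_
  obtain ⟨u, hu, hxu⟩ := (infDist_lt_iff hne).1 (lt_add_of_pos_right (infDist x s) hε)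
  obtain ⟨v, hv, hyv⟩ := (infDist_lt_iff hne).1 (lt_add_of_pos_right (infDist y s) hε)
  calc infDist (a • x + b • y) s
      ≤ dist (a • x + b • y) (a • u + b • v) := infDist_le_dist_of_mem (hs hu hv ha hb hab)
    _ ≤ a * dist x u + b * dist y v := by
      grw [dist_add_add_le, dist_smul₀, dist_smul₀, Real.norm_of_nonneg ha,
        Real.norm_of_nonneg hb]
    _ ≤ a * (infDist x s + ε) + b * (infDist y s + ε) := by gcongr
    _ = a * infDist x s + b * infDist y s + ε := by linear_combination ε * hab

theorem _root_.Convex.setOf_le_infDist_compl (hs : Convex ℝ s) (r : ℝ) :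
    Convex ℝ {x | r ≤ infDist x sᶜ} := by
  rcases sᶜ.eq_empty_or_nonempty with hsc | hsc
  · simp only [hsc, infDist_empty]
    rcases le_or_gt r 0 with hr | hr
    · simp [hr, convex_univ]
    · simp [hr.not_ge, convex_empty]
  intro x hx y hy a b ha hb hab
  simp only [mem_ofPred_eq, le_infDist hsc] at hx hy ⊢
  intro w hw
  by_contra! hlt
  set v := w - (a • x + b • y)
  have shift_mem : ∀ z, (∀ y ∈ sᶜ, r ≤ dist z y) → z + v ∈ s := fun z hz => by
    by_contra hout
    have := hz _ hout
    rw [dist_self_add_right, ← dist_eq_norm'] at this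
    exact this.not_gt hlt
  refine hw ?_
  convert hs (shift_mem x hx) (shift_mem y hy) ha hb hab using 1
  rw [smul_add, smul_add, add_add_add_comm, ← add_smul, hab, one_smul, add_sub_cancel]

theorem quasiconcaveOn_signedInfDist (hs : Convex ℝ s) :
    QuasiconcaveOn ℝ univ (signedInfDist s) := by
  intro r
  rcases le_or_gt r 0 with hr | hr
  · convert hs.convexOn_infDist.convex_le (-r) using 1
    ext x
    by_cases hx : x ∈ s
    · simp [signedInfDist_of_mem hx, infDist_zero_of_mem hx, hr, hr.trans infDist_nonneg]
    · simp [signedInfDist_of_notMem hx, le_neg]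
  · convert hs.setOf_le_infDist_compl r using 1
    ext x
    by_cases hx : x ∈ s
    · simp [signedInfDist_of_mem hx]
    · simp [signedInfDist_of_notMem hx, infDist_zero_of_mem (mem_compl hx), hr.not_ge,
        (neg_nonpos.2 infDist_nonneg).trans_lt hr |>.not_ge]

theorem infDist_zero_compl_pointedCone (C : PointedCone ℝ V) : infDist 0 (C : Set V)ᶜ = 0 := by
  have hscale : (2 : ℝ) • (C : Set V)ᶜ = (C : Set V)ᶜ := by
    ext x
    rw [mem_smul_set_iff_inv_smul_mem₀ two_ne_zero, mem_compl_iff, mem_compl_iff, SetLike.mem_coe,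
      SetLike.mem_coe, C.smul_mem_iff (by norm_num)]
  have := infDist_smul₀ (two_ne_zero (α := ℝ)) (C : Set V)ᶜ 0
  rw [smul_zero, hscale, Real.norm_two] at this
  linarith

theorem signedInfDist_pointedCone_zero (C : PointedCone ℝ V) :
    signedInfDist (C : Set V) 0 = 0 := by
  rw [signedInfDist_of_mem C.zero_mem, infDist_zero_compl_pointedCone]

end Convex

end Metric

section Orthant

variable {ι n : Type*} [Fintype ι]

/-- The cone `D + ℝⁿ₊`, where `D` is the conic hull of the vectors `g j`. -/
def conicHullAddOrthant (g : ι → EuclideanSpace ℝ n) : PointedCone ℝ (EuclideanSpace ℝ n) where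
  carrier := {z | ∃ (lam : ι → ℝ) (r : EuclideanSpace ℝ n),
    (∀ j, 0 ≤ lam j) ∧ (∀ i, 0 ≤ r i) ∧ z = (∑ j, lam j • g j) + r}
  add_mem' := by
    rintro _ _ ⟨l₁, r₁, hl₁, hr₁, rfl⟩ ⟨l₂, r₂, hl₂, hr₂, rfl⟩
    refine ⟨l₁ + l₂, r₁ + r₂, fun j => add_nonneg (hl₁ j) (hl₂ j),
      fun i => add_nonneg (hr₁ i) (hr₂ i), ?_⟩
    simp only [Pi.add_apply, add_smul, Finset.sum_add_distrib]
    abel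
  zero_mem' := ⟨0, 0, fun _ => le_rfl, fun _ => le_rfl, by simp⟩
  smul_mem' := by
    rintro ⟨c, hc⟩ _ ⟨l, r, hl, hr, rfl⟩
    refine ⟨c • l, c • r, fun j => mul_nonneg hc (hl j), fun i => mul_nonneg hc (hr i), ?_⟩
    simp [Finset.smul_sum, smul_smul]

variable {g : ι → EuclideanSpace ℝ n}

theorem mem_conicHullAddOrthant_of_nonneg {r : EuclideanSpace ℝ n} (hr : ∀ i, 0 ≤ r i) :
    r ∈ conicHullAddOrthant g :=
  ⟨0, r, fun _ => le_rfl, hr, by simp⟩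

theorem mem_conicHullAddOrthant_self [DecidableEq ι] (j : ι) : g j ∈ conicHullAddOrthant g :=
  ⟨Pi.single j 1, 0, fun i => by rw [Pi.single_apply]; split_ifs <;> norm_num, fun _ => le_rfl,
    by simp⟩

end Orthant

theorem stmt_5_general (p t : ℕ)
    (x : Fin t → EuclideanSpace ℝ (Fin p)) (xk : EuclideanSpace ℝ (Fin p))
    (E : Set (EuclideanSpace ℝ (Fin p)))
    (hE : E = {z | ∃ (lam : Fin t → ℝ) (r : EuclideanSpace ℝ (Fin p)),
        (∀ j, 0 ≤ lam j) ∧ (∀ i, 0 ≤ r i) ∧ z = (∑ j, lam j • (x j - xk)) + r})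
    (ψ : EuclideanSpace ℝ (Fin p) → ℝ)
    (hψ : ∀ z, ψ z = Metric.infDist (z - xk) Eᶜ - Metric.infDist (z - xk) E) :
    Continuous ψ ∧
    (∀ (a b : EuclideanSpace ℝ (Fin p)) (lam : ℝ), 0 ≤ lam → lam ≤ 1 →
      min (ψ a) (ψ b) ≤ ψ (lam • a + (1 - lam) • b)) ∧
    (∀ a b : EuclideanSpace ℝ (Fin p), (∀ i, a i ≤ b i) → ψ a ≤ ψ b) ∧
    ψ xk = 0 ∧
    (∀ j : Fin t, ψ xk ≤ ψ (x j)) := by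
  obtain rfl : E = conicHullAddOrthant (fun j => x j - xk) := hE
  set C := conicHullAddOrthant fun j => x j - xk
  obtain rfl : ψ = fun z => signedInfDist (C : Set _) (z - xk) := funext hψ
  have hψk : signedInfDist (C : Set _) (xk - xk) = 0 := by
    rw [sub_self, signedInfDist_pointedCone_zero]
  refine ⟨continuous_signedInfDist.comp (continuous_sub_right xk), ?_, ?_, hψk, ?_⟩
  · intro a b lam h0 h1
    have hcomb : lam • a + (1 - lam) • b - xk = lam • (a - xk) + (1 - lam) • (b - xk) := by
      module
    simpa only [hcomb] using
      (quasiconcaveOn_iff_min_le.1 (quasiconcaveOn_signedInfDist C.convex)).2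
        (mem_univ _) (mem_univ _) h0 (sub_nonneg.2 h1) (add_sub_cancel lam 1)
  · intro a b hab
    have hshift : ∀ y ∈ (C : Set _), y + (b - a) ∈ C := fun y hy =>
      C.add_mem hy (mem_conicHullAddOrthant_of_nonneg fun i => sub_nonneg.2 (hab i))
    simpa only [sub_add_sub_cancel'] using signedInfDist_le_add_of_forall_add_mem hshift (a - xk)
  · intro j
    exact hψk.trans_le (signedInfDist_nonneg_of_mem (mem_conicHullAddOrthant_self j))

/-- ψ is continuous, quasi-concave, increasing w.r.t. the componentwise
order, satisfies ψ(x_k) = 0, and ψ(x_j) ≥ ψ(x_k) for all j. -/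
theorem stmt_5 (p t : ℕ) (hp : 1 ≤ p) (ht : 1 ≤ t)
    (x : Fin t → EuclideanSpace ℝ (Fin p)) (xk : EuclideanSpace ℝ (Fin p))
    (E : Set (EuclideanSpace ℝ (Fin p)))
    (hE : E = {z | ∃ (lam : Fin t → ℝ) (r : EuclideanSpace ℝ (Fin p)),
        (∀ j, 0 ≤ lam j) ∧ (∀ i, 0 ≤ r i) ∧ z = (∑ j, lam j • (x j - xk)) + r})
    (hEne : E ≠ Set.univ)
    (ψ : EuclideanSpace ℝ (Fin p) → ℝ)
    (hψ : ∀ z, ψ z = Metric.infDist (z - xk) Eᶜ - Metric.infDist (z - xk) E) :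
    Continuous ψ ∧
    (∀ (a b : EuclideanSpace ℝ (Fin p)) (lam : ℝ), 0 ≤ lam → lam ≤ 1 →
      min (ψ a) (ψ b) ≤ ψ (lam • a + (1 - lam) • b)) ∧
    (∀ a b : EuclideanSpace ℝ (Fin p), (∀ i, a i ≤ b i) → ψ a ≤ ψ b) ∧
    ψ xk = 0 ∧
    (∀ j : Fin t, ψ xk ≤ ψ (x j)) :=
  stmt_5_general p t x xk E hE ψ hψ
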